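/- Let |Ω⟩ be a unit vector in H_Q ⊗ H_{S'}, |ψ⟩ a unit vector in H_Q, and let ω_Q = Tr_{S'}(|Ω⟩⟨Ω|), ω_{S'} = Tr_Q(|Ω⟩⟨Ω|). Then ⟨Ω| (|ψ⟩⟨ψ| ⊗ ω_{S'}) |Ω⟩ ≥ (⟨ψ| ω_Q |ψ⟩)². -/

import Mathlib

open Matrix Kronecker
open scoped ComplexOrder

/-- Time evolution unitary `e^{-iHt}`. -/
noncomputable def timeEvo {ι : Type} [Fintype ι] [DecidableEq ι]
    (H : Matrix ι ι ℂ) (t : ℝ) : Matrix ι ι ℂ :=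
  NormedSpace.exp ((-(Complex.I * (t : ℂ))) • H)

/-- Conjugation `U M U†`. -/
noncomputable def uconj {ι : Type} [Fintype ι] (U M : Matrix ι ι ℂ) : Matrix ι ι ℂ :=
  U * M * Uᴴ

/-- A density operator: positive semidefinite with unit trace. -/
noncomputable def IsState {ι : Type} [Fintype ι] (ρ : Matrix ι ι ℂ) : Prop :=
  ρ.PosSemidef ∧ ρ.trace = 1

/-- Choi matrix of a linear map. -/
noncomputable def choi {ι κ : Type} [Fintype ι] [DecidableEq ι] [Fintype κ]
    (E : Matrix ι ι ℂ →ₗ[ℂ] Matrix κ κ ℂ) : Matrix (ι × κ) (ι × κ) ℂ :=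
  fun p q => E (Matrix.single p.1 q.1 1) p.2 q.2

/-- A quantum channel: completely positive (positive semidefinite Choi matrix)
and trace preserving. -/
noncomputable def IsCPTP {ι κ : Type} [Fintype ι] [DecidableEq ι] [Fintype κ]
    (E : Matrix ι ι ℂ →ₗ[ℂ] Matrix κ κ ℂ) : Prop :=
  (choi E).PosSemidef ∧ ∀ M : Matrix ι ι ℂ, (E M).trace = M.trace

/-- Partial trace over the second (right) tensor factor. -/
noncomputable def ptraceRight {ι κ : Type} [Fintype ι] [Fintype κ]
    (M : Matrix (ι × κ) (ι × κ) ℂ) : Matrix ι ι ℂ :=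
  fun i j => ∑ k, M (i, k) (j, k)

/-- Partial trace over the first (left) tensor factor. -/
noncomputable def ptraceLeft {ι κ : Type} [Fintype ι] [Fintype κ]
    (M : Matrix (ι × κ) (ι × κ) ℂ) : Matrix κ κ ℂ :=
  fun i j => ∑ k, M (k, i) (k, j)

/-- Positive semidefinite square root, extended by `0` to non-PSD matrices. -/
noncomputable def msqrt {ι : Type} [Fintype ι] [DecidableEq ι]
    (M : Matrix ι ι ℂ) : Matrix ι ι ℂ :=
  @dite _ M.PosSemidef (Classical.propDecidable _) (fun h => (h.1.eigenvectorUnitary : Matrix ι ι ℂ) *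
    Matrix.diagonal (fun i => ((Real.sqrt (h.1.eigenvalues i) : ℝ) : ℂ)) *
    (star h.1.eigenvectorUnitary : Matrix ι ι ℂ)) (fun _ => 0)

/-- Trace norm `‖M‖₁ = Tr √(M†M)`. -/
noncomputable def traceNorm {ι : Type} [Fintype ι] [DecidableEq ι]
    (M : Matrix ι ι ℂ) : ℝ :=
  (msqrt (Mᴴ * M)).trace.re

/-- Uhlmann fidelity `Fid(σ,τ) = ‖√σ√τ‖₁`. -/
noncomputable def Fid {ι : Type} [Fintype ι] [DecidableEq ι]
    (σ τ : Matrix ι ι ℂ) : ℝ :=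
  traceNorm (msqrt σ * msqrt τ)

/-- Rank-one projector `|v⟩⟨v|` of a vector. -/
noncomputable def proj {ι : Type} (v : ι → ℂ) : Matrix ι ι ℂ :=
  Matrix.vecMulVec v (star v)

/-- The asymmetry monotone `f_t(ρ) = 1 - Fid(ρ, e^{-iHt} ρ e^{iHt})`. -/
noncomputable def ft {ι : Type} [Fintype ι] [DecidableEq ι]
    (H : Matrix ι ι ℂ) (t : ℝ) (ρ : Matrix ι ι ℂ) : ℝ :=
  1 - Fid ρ (uconj (timeEvo H t) ρ)

/-!
Writing `Ω = vec X` for a matrix `X` (so `Ω (q, s) = X s q`), the marginals are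
`ω_{S'} = X Xᴴ` and `ω_Q = (Xᴴ X)ᵀ`, and the left-hand side becomes `ψ† ω_Q² ψ = ‖ω_Q ψ‖²`.
The bound is then Cauchy–Schwarz: `⟨ψ, ω_Q ψ⟩² ≤ ‖ψ‖² ‖ω_Q ψ‖²`.
-/

section CauchySchwarz

variable {𝕜 n : Type*} [RCLike 𝕜] [Fintype n]

theorem norm_star_dotProduct_sq_le (u v : n → 𝕜) :
    ‖star u ⬝ᵥ v‖ ^ 2 ≤ RCLike.re (star u ⬝ᵥ u) * RCLike.re (star v ⬝ᵥ v) := by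
  have h := inner_mul_inner_self_le (𝕜 := 𝕜) (WithLp.toLp 2 u) (WithLp.toLp 2 v)
  have hvu : u ⬝ᵥ star v = star (star u ⬝ᵥ v) := by
    rw [Matrix.star_dotProduct, star_star, dotProduct_comm]
  simp only [EuclideanSpace.inner_toLp_toLp, hvu, norm_star] at h
  rwa [dotProduct_comm v (star u), dotProduct_comm u (star u), dotProduct_comm v (star v),
    ← sq] at h

theorem re_star_dotProduct_mulVec_sq_le (A : Matrix n n 𝕜) {ψ : n → 𝕜}
    (hψ : star ψ ⬝ᵥ ψ = 1) :
    RCLike.re (star ψ ⬝ᵥ (A *ᵥ ψ)) ^ 2 ≤ RCLike.re (star (A *ᵥ ψ) ⬝ᵥ (A *ᵥ ψ)) := by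
  calc RCLike.re (star ψ ⬝ᵥ (A *ᵥ ψ)) ^ 2 ≤ ‖star ψ ⬝ᵥ (A *ᵥ ψ)‖ ^ 2 := by
        rw [← sq_abs]; gcongr; exact RCLike.abs_re_le_norm _
    _ ≤ _ := by simpa [hψ] using norm_star_dotProduct_sq_le ψ (A *ᵥ ψ)

end CauchySchwarz

section Bipartite

variable {Q S : Type} [Fintype Q] [Fintype S]

theorem ptraceLeft_proj_vec (X : Matrix S Q ℂ) : ptraceLeft (proj (vec X)) = X * Xᴴ := by
  ext i j; simp [ptraceLeft, proj, vec, Matrix.mul_apply, vecMulVec_apply]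

theorem ptraceRight_proj_vec (X : Matrix S Q ℂ) : ptraceRight (proj (vec X)) = (Xᴴ * X)ᵀ := by
  ext i j; simp [ptraceRight, proj, vec, Matrix.mul_apply, vecMulVec_apply, mul_comm]

theorem star_vec_dotProduct_kronecker_proj_mulVec_vec (X : Matrix S Q ℂ) (ψ : Q → ℂ)
    (ρ : Matrix S S ℂ) :
    star (vec X) ⬝ᵥ ((proj ψ ⊗ₖ ρ) *ᵥ vec X) = ψ ⬝ᵥ ((Xᴴ * ρ * X) *ᵥ star ψ) := by
  rw [kronecker_mulVec_vec, star_vec_dotProduct_vec, proj, transpose_vecMulVec, ← Matrix.mul_assoc,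
    ← Matrix.mul_assoc, mul_vecMulVec, trace_vecMulVec, dotProduct_comm]

theorem star_dotProduct_kronecker_proj_ptraceLeft_mulVec (Ω : Q × S → ℂ) (ψ : Q → ℂ) :
    star Ω ⬝ᵥ ((proj ψ ⊗ₖ ptraceLeft (proj Ω)) *ᵥ Ω)
      = star (ptraceRight (proj Ω) *ᵥ ψ) ⬝ᵥ (ptraceRight (proj Ω) *ᵥ ψ) := by
  obtain ⟨X, rfl⟩ := vec_bijective.surjective Ω
  rw [star_vec_dotProduct_kronecker_proj_mulVec_vec, ptraceLeft_proj_vec, ptraceRight_proj_vec,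
    mulVec_transpose, star_vecMul, conjTranspose_mul, conjTranspose_conjTranspose,
    dotProduct_comm (_ *ᵥ star ψ), dotProduct_mulVec, dotProduct_mulVec, vecMul_vecMul]
  simp only [Matrix.mul_assoc]

end Bipartite

theorem overlap_bound_for_pure_bipartite_general
    {Q S' : Type} [Fintype Q] [Fintype S']
    (Ω : Q × S' → ℂ)
    (ψ : Q → ℂ) (hψ : star ψ ⬝ᵥ ψ = 1) :
    ((star ψ ⬝ᵥ (ptraceRight (proj Ω) *ᵥ ψ)).re) ^ 2
      ≤ (star Ω ⬝ᵥ ((proj ψ ⊗ₖ ptraceLeft (proj Ω)) *ᵥ Ω)).re := by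
  rw [star_dotProduct_kronecker_proj_ptraceLeft_mulVec]
  exact re_star_dotProduct_mulVec_sq_le _ hψ

/-- For a bipartite unit vector `Ω` with marginals `ω_Q, ω_{S'}` and a unit
vector `ψ`, one has `⟨Ω|(|ψ⟩⟨ψ| ⊗ ω_{S'})|Ω⟩ ≥ (⟨ψ|ω_Q|ψ⟩)²`. -/
theorem overlap_bound_for_pure_bipartite
    {Q S' : Type} [Fintype Q] [DecidableEq Q] [Fintype S'] [DecidableEq S']
    (Ω : Q × S' → ℂ) (hΩ : star Ω ⬝ᵥ Ω = 1)
    (ψ : Q → ℂ) (hψ : star ψ ⬝ᵥ ψ = 1) :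
    ((star ψ ⬝ᵥ (ptraceRight (proj Ω) *ᵥ ψ)).re) ^ 2
      ≤ (star Ω ⬝ᵥ ((proj ψ ⊗ₖ ptraceLeft (proj Ω)) *ᵥ Ω)).re :=
  overlap_bound_for_pure_bipartite_general Ω ψ hψ
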